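/- arXiv:2505.10051 — 4 statements merged into one kernel-verified Lean document; each statement's English description precedes it below -/
import Mathlib

section
/- Let q ≥ 2 and let ℓ = (ℓ_1,…,ℓ_{2q}) ∈ ℤ^{2q}, σ = (σ_1,…,σ_{2q}) ∈ {-1,1}^{2q} satisfy the zero mass condition σ_1 + ⋯ + σ_{2q} = 0, the zero momentum condition σ_1 ℓ_1 + ⋯ + σ_{2q} ℓ_{2q} = 0, and the resonance condition σ_1 ℓ_1² + ⋯ + σ_{2q} ℓ_{2q}² = 0. Assume that (ℓ,σ) admits no pairing of the two highest modes, i.e. there do not exist j_1 ≠ j_2 with ℓ_{j_1} = ℓ_{j_2}, σ_{j_1} = -σ_{j_2}, and |ℓ_{j_1}| = |ℓ_1^*|, where ℓ^* denotes a rearrangement of ℓ with |ℓ_1^*| ≥ ⋯ ≥ |ℓ_{2q}^*|. Then there exists a constant C_q > 0 (depending only on q) such that |ℓ_1^*| ≤ C_q |ℓ_3^*|². -/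
set_option maxHeartbeats 1000000


/-- If `(ℓ,σ)` satisfies the zero mass, zero momentum and resonance
conditions and admits no pairing between the two highest modes, then
`|ℓ_1^*| ≤ C_q |ℓ_3^*|²`. The rearrangement `ℓ^*` is encoded by a permutation `φ`
sorting `|ℓ|` in nonincreasing order. -/
theorem stmt0 (q : ℕ) (hq : 2 ≤ q) :
    ∃ C : ℝ, 0 < C ∧
      ∀ (ℓ σ : Fin (2 * q) → ℤ),
        (∀ i, σ i = 1 ∨ σ i = -1) →
        (∑ i, σ i) = 0 →
        (∑ i, σ i * ℓ i) = 0 →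
        (∑ i, σ i * (ℓ i) ^ 2) = 0 →
        ∀ φ : Equiv.Perm (Fin (2 * q)),
          (∀ i j : Fin (2 * q), i ≤ j → |ℓ (φ j)| ≤ |ℓ (φ i)|) →
          (¬ ∃ j1 j2 : Fin (2 * q), j1 ≠ j2 ∧ ℓ j1 = ℓ j2 ∧ σ j1 = -σ j2 ∧
              |ℓ j1| = |ℓ (φ ⟨0, by omega⟩)|) →
          (|ℓ (φ ⟨0, by omega⟩)| : ℝ) ≤ C * (|ℓ (φ ⟨2, by omega⟩)| : ℝ) ^ 2 := by
  have hq0 : (0 : ℝ) < 2 * q := by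
    have : (2 : ℝ) ≤ q := by exact_mod_cast hq
    linarith
  refine ⟨2 * q, hq0, ?_⟩
  intro ℓ σ hσ hmass hmom hres φ hsort hnp
  have h0 : (0 : ℕ) < 2 * q := by omega
  have h1 : (1 : ℕ) < 2 * q := by omega
  have h2 : (2 : ℕ) < 2 * q := by omega
  set j0 : Fin (2 * q) := φ ⟨0, by omega⟩ with hj0def
  set j1 : Fin (2 * q) := φ ⟨1, by omega⟩ with hj1def
  set j2 : Fin (2 * q) := φ ⟨2, by omega⟩ with hj2def
  set a : ℤ := ℓ j0 with ha
  set b : ℤ := ℓ j1 with hb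
  set M : ℤ := |ℓ j2| with hM
  -- reduce to integer inequality
  suffices h : |a| ≤ 2 * q * M ^ 2 by
    have h' : ((|a| : ℤ) : ℝ) ≤ (((2 * q * M ^ 2 : ℤ)) : ℝ) := by exact_mod_cast h
    push_cast at h'
    convert h' using 2
    rw [hM, Int.cast_abs]
  have hMnn : 0 ≤ M := abs_nonneg _
  have hj01 : j0 ≠ j1 := by
    simp only [hj0def, hj1def, ne_eq, EmbeddingLike.apply_eq_iff_eq, Fin.mk.injEq]
    omega
  -- every other index is small
  have hsmall : ∀ i : Fin (2 * q), i ≠ j0 → i ≠ j1 → |ℓ i| ≤ M := by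
    intro i hi0 hi1
    have hk : φ (φ.symm i) = i := φ.apply_symm_apply i
    have hk2 : (⟨2, h2⟩ : Fin (2 * q)) ≤ φ.symm i := by
      have e0 : φ.symm i ≠ ⟨0, h0⟩ := by
        intro h; apply hi0; rw [← hk, h]
      have e1 : φ.symm i ≠ ⟨1, h1⟩ := by
        intro h; apply hi1; rw [← hk, h]
      have v0 : (φ.symm i).val ≠ 0 := fun h => e0 (Fin.ext h)
      have v1 : (φ.symm i).val ≠ 1 := fun h => e1 (Fin.ext h)
      show (2 : ℕ) ≤ (φ.symm i).val
      omega
    have := hsort ⟨2, h2⟩ (φ.symm i) hk2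
    rwa [hk] at this
  have hba : |b| ≤ |a| := hsort ⟨0, h0⟩ ⟨1, h1⟩ (by show (0:ℕ) ≤ 1; omega)
  -- sum splitting
  set S : Finset (Fin (2 * q)) := Finset.univ \ {j0, j1} with hS
  have hsub : ({j0, j1} : Finset (Fin (2 * q))) ⊆ Finset.univ := Finset.subset_univ _
  have hsplit : ∀ f : Fin (2 * q) → ℤ, ∑ i, f i = f j0 + f j1 + ∑ i ∈ S, f i := by
    intro f
    rw [← Finset.sum_sdiff hsub, Finset.sum_pair hj01]
    ring
  have hcard : (S.card : ℤ) ≤ 2 * q := by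
    have : S.card ≤ Finset.univ.card := Finset.card_le_card (Finset.sdiff_subset)
    simp at this
    exact_mod_cast this.trans (by simp)
  -- bound on the tail sums
  have habs : ∀ i, |σ i| = 1 := by
    intro i; rcases hσ i with h | h <;> simp [h]
  have htail2 : |∑ i ∈ S, σ i * ℓ i ^ 2| ≤ 2 * q * M ^ 2 := by
    calc |∑ i ∈ S, σ i * ℓ i ^ 2| ≤ ∑ i ∈ S, |σ i * ℓ i ^ 2| :=
          Finset.abs_sum_le_sum_abs _ _
      _ ≤ ∑ i ∈ S, M ^ 2 := by
          apply Finset.sum_le_sum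
          intro i hi
          simp only [hS, Finset.mem_sdiff, Finset.mem_insert, Finset.mem_singleton] at hi
          push_neg at hi
          have hle := hsmall i hi.2.1 hi.2.2
          rw [abs_mul, habs, one_mul, abs_pow]
          nlinarith [abs_nonneg (ℓ i)]
      _ ≤ 2 * q * M ^ 2 := by
          rw [Finset.sum_const, nsmul_eq_mul]
          nlinarith [sq_nonneg M]
  have htail1 : |∑ i ∈ S, σ i * ℓ i| ≤ 2 * q * M := by
    calc |∑ i ∈ S, σ i * ℓ i| ≤ ∑ i ∈ S, |σ i * ℓ i| := Finset.abs_sum_le_sum_abs _ _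
      _ ≤ ∑ i ∈ S, M := by
          apply Finset.sum_le_sum
          intro i hi
          simp only [hS, Finset.mem_sdiff, Finset.mem_insert, Finset.mem_singleton] at hi
          push_neg at hi
          have hle := hsmall i hi.2.1 hi.2.2
          rw [abs_mul, habs, one_mul]
          exact hle
      _ ≤ 2 * q * M := by
          rw [Finset.sum_const, nsmul_eq_mul]
          nlinarith
  have key2 : |σ j0 * a ^ 2 + σ j1 * b ^ 2| ≤ 2 * q * M ^ 2 := by
    have := hsplit (fun i => σ i * ℓ i ^ 2)
    rw [hres] at this
    have heq : σ j0 * a ^ 2 + σ j1 * b ^ 2 = -∑ i ∈ S, σ i * ℓ i ^ 2 := by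
      simp only [ha, hb]; linarith
    rw [heq, abs_neg]; exact htail2
  have key1 : |σ j0 * a + σ j1 * b| ≤ 2 * q * M := by
    have := hsplit (fun i => σ i * ℓ i)
    rw [hmom] at this
    have heq : σ j0 * a + σ j1 * b = -∑ i ∈ S, σ i * ℓ i := by
      simp only [ha, hb]; linarith
    rw [heq, abs_neg]; exact htail1
  have hqz : (2 : ℤ) ≤ (q : ℤ) := by exact_mod_cast hq
  -- case analysis on signs
  rcases hσ j0 with hs0 | hs0 <;> rcases hσ j1 with hs1 | hs1
  -- same signs (1,1)
  · rw [hs0, hs1, one_mul, one_mul] at key2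
    have h2' : a ^ 2 + b ^ 2 ≤ 2 * q * M ^ 2 := by
      have := le_abs_self (a ^ 2 + b ^ 2); linarith
    have : |a| ≤ |a| ^ 2 := by
      rcases eq_or_lt_of_le (abs_nonneg a) with h | h
      · rw [← h]; norm_num
      · nlinarith
    nlinarith [sq_abs a, sq_nonneg b]
  -- opposite signs (1,-1)
  · rw [hs0, hs1] at key2 key1
    have hk2 : |a ^ 2 - b ^ 2| ≤ 2 * q * M ^ 2 := by
      have : 1 * a ^ 2 + -1 * b ^ 2 = a ^ 2 - b ^ 2 := by ring
      rwa [this] at key2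
    have hk1 : |a - b| ≤ 2 * q * M := by
      have : 1 * a + -1 * b = a - b := by ring
      rwa [this] at key1
    have hab : a ≠ b := by
      intro h
      exact hnp ⟨j0, j1, hj01, h, by norm_num [hs0, hs1], rfl⟩
    have hab1 : 1 ≤ |a - b| := Int.one_le_abs (sub_ne_zero.2 hab)
    have hM1 : 1 ≤ M := by
      rcases eq_or_ne (ℓ j2) 0 with h | h
      · exfalso
        apply hab
        have hz : |a - b| ≤ 0 := by rw [hM, h] at hk1; simpa using hk1
        have := abs_nonpos_iff.mp hz
        linarith
      · rw [hM]; exact Int.one_le_abs h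
    have hsum : |a + b| ≤ 2 * q * M ^ 2 := by
      calc |a + b| ≤ |a + b| * |a - b| := le_mul_of_one_le_right (abs_nonneg _) hab1
        _ = |a ^ 2 - b ^ 2| := by rw [← abs_mul]; ring_nf
        _ ≤ 2 * q * M ^ 2 := hk2
    have h2a : 2 * |a| ≤ |a - b| + |a + b| := by
      have := abs_add_le (a - b) (a + b)
      have he : (a - b) + (a + b) = 2 * a := by ring
      rw [he] at this
      rw [abs_mul] at this
      simpa using this
    nlinarith
  -- opposite signs (-1,1)
  · rw [hs0, hs1] at key2 key1
    have hk2 : |a ^ 2 - b ^ 2| ≤ 2 * q * M ^ 2 := by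
      have : |(-1) * a ^ 2 + 1 * b ^ 2| = |a ^ 2 - b ^ 2| := by
        rw [← abs_neg]; ring_nf
      rwa [this] at key2
    have hk1 : |a - b| ≤ 2 * q * M := by
      have : |(-1) * a + 1 * b| = |a - b| := by
        rw [← abs_neg]; ring_nf
      rwa [this] at key1
    have hab : a ≠ b := by
      intro h
      exact hnp ⟨j0, j1, hj01, h, by norm_num [hs0, hs1], rfl⟩
    have hab1 : 1 ≤ |a - b| := Int.one_le_abs (sub_ne_zero.2 hab)
    have hM1 : 1 ≤ M := by
      rcases eq_or_ne (ℓ j2) 0 with h | h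
      · exfalso
        apply hab
        have hz : |a - b| ≤ 0 := by rw [hM, h] at hk1; simpa using hk1
        have := abs_nonpos_iff.mp hz
        linarith
      · rw [hM]; exact Int.one_le_abs h
    have hsum : |a + b| ≤ 2 * q * M ^ 2 := by
      calc |a + b| ≤ |a + b| * |a - b| := le_mul_of_one_le_right (abs_nonneg _) hab1
        _ = |a ^ 2 - b ^ 2| := by rw [← abs_mul]; ring_nf
        _ ≤ 2 * q * M ^ 2 := hk2
    have h2a : 2 * |a| ≤ |a - b| + |a + b| := by
      have := abs_add_le (a - b) (a + b)
      have he : (a - b) + (a + b) = 2 * a := by ring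
      rw [he] at this
      rw [abs_mul] at this
      simpa using this
    nlinarith
  -- same signs (-1,-1)
  · rw [hs0, hs1] at key2
    have h2' : a ^ 2 + b ^ 2 ≤ 2 * q * M ^ 2 := by
      have heq : |(-1) * a ^ 2 + (-1) * b ^ 2| = |a ^ 2 + b ^ 2| := by
        rw [← abs_neg]; ring_nf
      rw [heq] at key2
      have := le_abs_self (a ^ 2 + b ^ 2); linarith
    have : |a| ≤ |a| ^ 2 := by
      rcases eq_or_lt_of_le (abs_nonneg a) with h | h
      · rw [← h]; norm_num
      · nlinarith
    nlinarith [sq_abs a, sq_nonneg b]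
end

section
/- Let ω ∈ ℝ^ℕ be a sequence of rationally independent real numbers, i.e. for every nonzero finitely supported k ∈ ℤ^ℕ, Σ_j k_j ω_j ≠ 0. Then for every θ ∈ 𝕋^ℕ the orbit {ωt + θ mod 2π : t ∈ ℝ} is dense in 𝕋^ℕ equipped with the product topology. -/
/-!
Kronecker's theorem via Weyl equidistribution. Along the flow `t ↦ v t` on a finite-dimensional
torus with `ℤ`-independent frequencies, a character `x ↦ exp (2πi ⟨n, x⟩)` becomes
`t ↦ exp (2πi ⟨n, v⟩ t)`, whose time averages tend to `0` unless `n = 0`, i.e. to its Haar mean.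
Time averages and Haar mean are `1`-Lipschitz in the sup norm and the characters span a dense
subspace (Stone–Weierstrass), so the time averages of every continuous function converge to its
mean. The distance to the orbit has mean zero and hence vanishes: the orbit is dense. Density in
the infinite product only involves finitely many coordinates at a time.
-/

open MeasureTheory Filter Topology Set Submodule Complex AddCircle UnitAddTorus
open scoped Real

section Equidistribution

variable {X : Type*} [TopologicalSpace X] [CompactSpace X] {γ : ℝ → X}

lemma dist_intervalAverage_comp_le (hγ : Continuous γ) (s : ℝ) (f g : C(X, ℂ)) :
    dist (⨍ t in 0..s, f (γ t)) (⨍ t in 0..s, g (γ t)) ≤ dist f g := by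
  rw [dist_eq_norm, dist_eq_norm, interval_average_eq, interval_average_eq, ← smul_sub,
    ← intervalIntegral.integral_sub (μ := volume) (f := fun t => f (γ t)) (g := fun t => g (γ t))
      ((f.continuous.comp hγ).intervalIntegrable 0 s)
      ((g.continuous.comp hγ).intervalIntegrable 0 s), norm_smul, norm_inv, sub_zero,
    Real.norm_eq_abs]
  have hbound : ‖∫ t in 0..s, f (γ t) - g (γ t)‖ ≤ ‖f - g‖ * |s - 0| :=
    intervalIntegral.norm_integral_le_of_norm_le_const fun t _ =>
      (f - g).norm_coe_le_norm (γ t)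
  rw [sub_zero] at hbound
  rcases eq_or_ne s 0 with rfl | hs
  · simp
  · calc |s|⁻¹ * ‖∫ t in 0..s, f (γ t) - g (γ t)‖ ≤ |s|⁻¹ * (‖f - g‖ * |s|) := by gcongr
      _ = ‖f - g‖ := by field_simp

variable [MeasurableSpace X] [OpensMeasurableSpace X]

lemma dist_integral_le (μ : Measure X) [IsProbabilityMeasure μ] (f g : C(X, ℂ)) :
    dist (∫ x, f x ∂μ) (∫ x, g x ∂μ) ≤ dist f g := by
  rw [dist_eq_norm, dist_eq_norm, ← integral_sub
    (f.continuous.integrable_of_hasCompactSupport (.of_compactSpace _))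
    (g.continuous.integrable_of_hasCompactSupport (.of_compactSpace _))]
  simpa using norm_integral_le_of_norm_le_const (μ := μ)
    (Eventually.of_forall fun x => (f - g).norm_coe_le_norm x)

theorem tendsto_intervalAverage_comp_of_span (hγ : Continuous γ) (μ : Measure X)
    [IsProbabilityMeasure μ] {S : Set C(X, ℂ)} (hS : (span ℂ S).topologicalClosure = ⊤)
    (h : ∀ g ∈ S, Tendsto (fun s => ⨍ t in 0..s, g (γ t)) atTop (𝓝 (∫ x, g x ∂μ)))
    (f : C(X, ℂ)) : Tendsto (fun s => ⨍ t in 0..s, f (γ t)) atTop (𝓝 (∫ x, f x ∂μ)) := by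
  have hμint (g : C(X, ℂ)) : Integrable g μ :=
    g.continuous.integrable_of_hasCompactSupport (.of_compactSpace _)
  have hγint (g : C(X, ℂ)) (s : ℝ) : IntervalIntegrable (fun t => g (γ t)) volume 0 s :=
    (g.continuous.comp hγ).intervalIntegrable 0 s
  -- closed because the time averages and the mean are `1`-Lipschitz in `f`
  have hclosed : IsClosed {f : C(X, ℂ) |
      Tendsto (fun s => ⨍ t in 0..s, f (γ t)) atTop (𝓝 (∫ x, f x ∂μ))} :=
    Equicontinuous.isClosed_setOfPred_tendsto
      (LipschitzWith.uniformEquicontinuous _ 1 fun s =>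
        .mk_one (dist_intervalAverage_comp_le hγ s)).equicontinuous
      (LipschitzWith.mk_one (dist_integral_le μ)).continuous
  have hspan : (span ℂ S : Set C(X, ℂ)) ⊆
      {f | Tendsto (fun s => ⨍ t in 0..s, f (γ t)) atTop (𝓝 (∫ x, f x ∂μ))} := by
    intro f hf
    induction hf using Submodule.span_induction with
    | mem g hg => exact h g hg
    | zero => simp
    | add f g _ _ hf hg =>
      simp only [mem_ofPred_eq, ContinuousMap.add_apply, interval_average_eq,
        intervalIntegral.integral_add (hγint f _) (hγint g _), smul_add,
        integral_add (hμint f) (hμint g)] at hf hg ⊢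
      exact hf.add hg
    | smul c f _ hf =>
      simp only [mem_ofPred_eq, ContinuousMap.smul_apply, interval_average_eq,
        intervalIntegral.integral_smul, integral_smul, smul_comm _ c] at hf ⊢
      exact hf.const_smul c
  have := closure_minimal hspan hclosed
  rw [← Submodule.topologicalClosure_coe, hS] at this
  exact this trivial

end Equidistribution

theorem denseRange_of_tendsto_intervalAverage {X : Type*} [MetricSpace X] [CompactSpace X]
    [MeasurableSpace X] [OpensMeasurableSpace X] {γ : ℝ → X} (μ : Measure X)
    [IsFiniteMeasure μ] [μ.IsOpenPosMeasure]
    (h : ∀ f : C(X, ℂ), Tendsto (fun s => ⨍ t in 0..s, f (γ t)) atTop (𝓝 (∫ x, f x ∂μ))) :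
    DenseRange γ := by
  intro x₀
  by_contra hx₀
  set dist_orbit : C(X, ℝ) := ⟨fun x => Metric.infDist x (range γ), by fun_prop⟩
  have hpos : 0 < ∫ x, dist_orbit x ∂μ :=
    dist_orbit.continuous.integral_pos_of_hasCompactSupport_nonneg_nonzero
      (.of_compactSpace _) (fun x => Metric.infDist_nonneg)
      ((Metric.infDist_pos_iff_notMem_closure (range_nonempty γ)).1 hx₀).ne'
  have hzero : ∫ x, (dist_orbit x : ℂ) ∂μ = 0 := by
    refine tendsto_nhds_unique (h ⟨fun x => (dist_orbit x : ℂ), by fun_prop⟩) ?_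
    simp [dist_orbit, Metric.infDist_zero_of_mem (mem_range_self _)]
  rw [integral_complex_ofReal, ofReal_eq_zero] at hzero
  exact hpos.ne' hzero

lemma denseRange_pi_of_forall_finset {α ι : Type*} {X : ι → Type*} [∀ i, TopologicalSpace (X i)]
    {f : α → ∀ i, X i} (h : ∀ I : Finset ι, DenseRange fun a (i : I) => f a i) :
    DenseRange f := by
  refine dense_iff_inter_open.2 fun U hU ⟨x, hx⟩ => ?_
  obtain ⟨I, u, hu, hIU⟩ := isOpen_pi_iff.1 hU x hx
  obtain ⟨a, ha⟩ := (h I).exists_mem_open (isOpen_set_pi finite_univ fun i _ => (hu i i.2).1)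
    ⟨fun i => x i, fun i _ => (hu i i.2).2⟩
  exact ⟨f a, hIU fun i hi => ha ⟨i, hi⟩ (mem_univ _), mem_range_self a⟩

lemma tendsto_intervalAverage_exp_mul_I {c : ℝ} (hc : c ≠ 0) :
    Tendsto (fun s : ℝ => ⨍ t in 0..s, exp (c * t * I)) atTop (𝓝 0) := by
  have hcI : (c : ℂ) * I ≠ 0 := mul_ne_zero (ofReal_ne_zero.2 hc) I_ne_zero
  have hbound (s : ℝ) (hs : 0 < s) : ‖⨍ t in 0..s, exp (c * t * I)‖ ≤ 2 / |c| * s⁻¹ := by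
    have := integral_exp_mul_complex (a := 0) (b := s) hcI
    simp only [mul_right_comm _ I] at this
    rw [interval_average_eq, this, norm_smul, norm_div, sub_zero, norm_inv,
      Real.norm_of_nonneg hs.le]
    have hnum : ‖exp (c * s * I) - exp (c * (0 : ℝ) * I)‖ ≤ 2 := by
      calc _ ≤ ‖exp ((c * s : ℝ) * I)‖ + ‖exp ((c * 0 : ℝ) * I)‖ := by
            push_cast; exact norm_sub_le _ _
        _ = 2 := by rw [norm_exp_ofReal_mul_I, norm_exp_ofReal_mul_I]; norm_num
    rw [norm_mul, norm_I, mul_one, norm_real, Real.norm_eq_abs, mul_comm]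
    gcongr
  exact squeeze_zero_norm' ((eventually_gt_atTop 0).mono hbound)
    (by simpa using tendsto_inv_atTop_zero.const_mul (2 / |c|))

section LinearFlow

def linearFlow (T : ℝ) {ι : Type*} (v : ι → ℝ) (t : ℝ) : ι → AddCircle T :=
  fun i => ((v i * t : ℝ) : AddCircle T)

variable {ι : Type*} {T : ℝ} {v : ι → ℝ}

lemma continuous_linearFlow : Continuous (linearFlow T v) :=
  continuous_pi fun _ => (AddCircle.continuous_mk' T).comp (continuous_const_mul _)

section Fintype

variable [Fintype ι]

lemma mFourier_linearFlow (n : ι → ℤ) (t : ℝ) :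
    mFourier n (linearFlow 1 v t) = exp ((2 * π * ∑ i, n i * v i : ℝ) * t * I) := by
  simp only [mFourier, linearFlow, ContinuousMap.coe_mk, fourier_coe_apply, ← exp_sum]
  congr 1
  push_cast
  rw [Finset.mul_sum, Finset.sum_mul, Finset.sum_mul]
  exact Finset.sum_congr rfl fun i _ => by ring

lemma integral_mFourier (n : ι → ℤ) :
    ∫ x, mFourier n x ∂(Measure.pi fun _ => haarAddCircle) = if n = 0 then 1 else 0 := by
  split_ifs with hn
  · simp [hn, mFourier_zero]
  · obtain ⟨i, hi⟩ := Function.ne_iff.1 hn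
    rw [show ⇑(mFourier n) = fun x => ∏ i, fourier (n i) (x i) from rfl,
      integral_fintype_prod_eq_prod]
    exact Finset.prod_eq_zero (Finset.mem_univ i)
      (integral_eq_zero_of_add_right_eq_neg (fourier_add_half_inv_index hi one_pos))

theorem tendsto_intervalAverage_mFourier_linearFlow (hv : LinearIndependent ℤ v) (n : ι → ℤ) :
    Tendsto (fun s => ⨍ t in 0..s, mFourier n (linearFlow 1 v t)) atTop
      (𝓝 (∫ x, mFourier n x ∂(Measure.pi fun _ => haarAddCircle))) := by
  rw [integral_mFourier]
  split_ifs with hn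
  · subst hn
    refine tendsto_const_nhds.congr' ((eventually_gt_atTop 0).mono fun s hs => ?_)
    simp [mFourier_zero, interval_average_eq, hs.ne']
  · simp only [mFourier_linearFlow]
    refine tendsto_intervalAverage_exp_mul_I (mul_ne_zero Real.two_pi_pos.ne' fun h => hn ?_)
    ext i
    exact Fintype.linearIndependent_iff.1 hv n (by simpa [zsmul_eq_mul] using h) i

theorem denseRange_linearFlow_one (hv : LinearIndependent ℤ v) : DenseRange (linearFlow 1 v) :=
  denseRange_of_tendsto_intervalAverage (Measure.pi fun _ => haarAddCircle)
    (tendsto_intervalAverage_comp_of_span continuous_linearFlow _ span_mFourier_closure_eq_top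
      (forall_mem_range.2 (tendsto_intervalAverage_mFourier_linearFlow hv)))

theorem denseRange_linearFlow_of_fintype (hT : T ≠ 0) (hv : LinearIndependent ℤ v) :
    DenseRange (linearFlow T v) := by
  let H : UnitAddTorus ι ≃ₜ (ι → AddCircle T) :=
    .piCongrRight fun _ => homeomorphAddCircle 1 T one_ne_zero hT
  have hH : linearFlow T v = H ∘ linearFlow 1 v ∘ (· / T) := by
    ext t i
    simp [H, linearFlow, mul_div_assoc', div_mul_cancel₀ _ hT]
  have hdiv : Function.Surjective (· / T) := fun t => ⟨t * T, mul_div_cancel_right₀ t hT⟩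
  rw [hH]
  exact H.surjective.denseRange.comp ((denseRange_linearFlow_one hv).comp hdiv.denseRange
    continuous_linearFlow) H.continuous

end Fintype

theorem denseRange_linearFlow (hT : T ≠ 0) (hv : LinearIndependent ℤ v) :
    DenseRange (linearFlow T v) :=
  denseRange_pi_of_forall_finset fun I =>
    denseRange_linearFlow_of_fintype (v := fun i : I => v i) hT (hv.comp _ Subtype.val_injective)

end LinearFlow

/-- for rationally independent frequencies `ω`, every orbit of the
linear flow `t ↦ ωt + θ` is dense in the infinite torus `𝕋^ℕ = (ℝ/2πℤ)^ℕ`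
with the product topology. -/
theorem stmt4 (ω : ℕ → ℝ)
    (hindep : ∀ k : ℕ →₀ ℤ, k ≠ 0 → (∑ j ∈ k.support, (k j : ℝ) * ω j) ≠ 0)
    (θ : ℕ → AddCircle (2 * π)) :
    Dense {x : ℕ → AddCircle (2 * π) |
      ∃ t : ℝ, x = fun j => ((ω j * t : ℝ) : AddCircle (2 * π)) + θ j} := by
  have hω : LinearIndependent ℤ ω := linearIndependent_iff.2 fun k hk => by
    by_contra hk0
    exact hindep k hk0 (by simpa [Finsupp.linearCombination_apply, Finsupp.sum] using hk)
  have := (Homeomorph.addRight θ).surjective.denseRange.comp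
    (denseRange_linearFlow Real.two_pi_pos.ne' hω) (continuous_add_const θ)
  rw [DenseRange] at this
  convert this using 1
  ext x
  simp [linearFlow, eq_comm, funext_iff]
end

section
/- Let ω ∈ ℝ^ℕ be rationally independent. Then the linear flow Φ_t(θ) = θ + ωt on 𝕋^ℕ is uniquely ergodic with respect to the product of normalized Haar measures: the product measure is the unique Φ_t-invariant Borel probability measure on 𝕋^ℕ. -/
open scoped Real ComplexConjugate
open MeasureTheory

instance : Fact (0 < 2 * π) := ⟨by positivity⟩

noncomputable section Stmt5Aux

namespace Stmt5Aux

abbrev GG : Type := ℕ → AddCircle (2 * π)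

/-- The flow. -/
def Phi (ω : ℕ → ℝ) (t : ℝ) : GG → GG :=
  fun θ j => θ j + ((ω j * t : ℝ) : AddCircle (2 * π))

lemma continuous_Phi (ω : ℕ → ℝ) (t : ℝ) : Continuous (Phi ω t) :=
  continuous_pi fun j => (continuous_apply j).add continuous_const

/-- Haar probability measure on the infinite torus. -/
def haarG : Measure GG := Measure.addHaarMeasure ⊤

instance : IsProbabilityMeasure haarG := by
  constructor
  rw [show (Set.univ : Set GG) = ((⊤ : TopologicalSpace.PositiveCompacts GG) : Set GG) by simp]
  exact Measure.addHaarMeasure_self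

instance : haarG.IsAddLeftInvariant := by
  unfold haarG; infer_instance

lemma haarG_translation_invariant (c : GG) :
    MeasurePreserving (fun θ => θ + c) haarG haarG := by
  have : (fun θ : GG => θ + c) = (fun θ : GG => c + θ) := by
    funext θ; exact add_comm _ _
  rw [this]
  exact measurePreserving_add_left haarG c

lemma haarG_flow_invariant (ω : ℕ → ℝ) (t : ℝ) :
    MeasurePreserving (Phi ω t) haarG haarG := by
  have : Phi ω t = fun θ => θ + (fun j => ((ω j * t : ℝ) : AddCircle (2 * π))) := rfl
  rw [this]
  exact haarG_translation_invariant _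

/-- Characters of the infinite torus indexed by finitely supported integer vectors. -/
def chi (k : ℕ →₀ ℤ) : C(GG, ℂ) :=
  ⟨fun x => ∏ j ∈ k.support, fourier (k j) (x j), by
    apply continuous_finset_prod
    intro j _
    exact (map_continuous (fourier (k j))).comp (continuous_apply j)⟩

lemma chi_apply (k : ℕ →₀ ℤ) (x : GG) :
    chi k x = ∏ j ∈ k.support, fourier (k j) (x j) := rfl

lemma chi_eq_prod_of_subset (k : ℕ →₀ ℤ) {s : Finset ℕ} (hs : k.support ⊆ s) (x : GG) :
    chi k x = ∏ j ∈ s, fourier (k j) (x j) := by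
  rw [chi_apply]
  refine Finset.prod_subset hs (fun j _ hj => ?_)
  rw [Finsupp.notMem_support_iff.mp hj]
  exact fourier_zero

lemma chi_zero : chi 0 = 1 := by
  ext x
  simp [chi_apply]

lemma fourier_arg_add {T : ℝ} (n : ℤ) (a b : AddCircle T) :
    fourier n (a + b) = fourier n a * fourier n b := by
  simp only [fourier_apply, smul_add, AddCircle.toCircle_add, Circle.coe_mul]

lemma chi_mul (k l : ℕ →₀ ℤ) : chi k * chi l = chi (k + l) := by
  ext x
  have hk : k.support ⊆ k.support ∪ l.support := Finset.subset_union_left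
  have hl : l.support ⊆ k.support ∪ l.support := Finset.subset_union_right
  have hkl : (k + l).support ⊆ k.support ∪ l.support := Finsupp.support_add
  simp only [ContinuousMap.mul_apply]
  rw [chi_eq_prod_of_subset k hk, chi_eq_prod_of_subset l hl, chi_eq_prod_of_subset (k + l) hkl,
    ← Finset.prod_mul_distrib]
  refine Finset.prod_congr rfl (fun j _ => ?_)
  rw [Finsupp.add_apply, fourier_add]

lemma chi_star (k : ℕ →₀ ℤ) : star (chi k) = chi (-k) := by
  ext x
  have : (star (chi k)) x = conj (chi k x) := rfl
  rw [this, chi_apply, chi_apply, Finsupp.support_neg, map_prod]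
  refine Finset.prod_congr rfl (fun j _ => ?_)
  rw [Finsupp.neg_apply, fourier_neg]

/-- The characters as a submonoid. -/
def chiMonoid : Submonoid C(GG, ℂ) where
  carrier := Set.range chi
  one_mem' := ⟨0, chi_zero⟩
  mul_mem' := by
    rintro _ _ ⟨k, rfl⟩ ⟨l, rfl⟩
    exact ⟨k + l, (chi_mul k l).symm⟩

lemma mem_span_of_mem_adjoin {f : C(GG, ℂ)}
    (hf : f ∈ StarAlgebra.adjoin ℂ (Set.range chi)) :
    f ∈ Submodule.span ℂ (Set.range chi) := by
  have hstar : star (Set.range chi) = Set.range chi := by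
    ext f
    rw [Set.mem_star]
    constructor
    · rintro ⟨k, hk⟩
      exact ⟨-k, by rw [← chi_star k, hk, star_star]⟩
    · rintro ⟨k, hk⟩
      exact ⟨-k, by rw [← hk, chi_star]⟩
  have hcl : (Submonoid.closure (Set.range chi ∪ star (Set.range chi)) : Set C(GG, ℂ))
      = Set.range chi := by
    rw [hstar, Set.union_self]
    exact congrArg SetLike.coe (Submonoid.closure_eq chiMonoid)
  have h2 : f ∈ Submodule.span ℂ
      (Submonoid.closure (Set.range chi ∪ star (Set.range chi)) : Set C(GG, ℂ)) := by
    rw [← StarAlgebra.adjoin_eq_span]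
    exact hf
  rwa [hcl] at h2

lemma chi_separates : (StarAlgebra.adjoin ℂ (Set.range chi)).SeparatesPoints := by
  intro x y hxy
  obtain ⟨j, hj⟩ := Function.ne_iff.mp hxy
  refine ⟨_, ⟨chi (Finsupp.single j 1), StarAlgebra.subset_adjoin ℂ _ ⟨_, rfl⟩, rfl⟩, ?_⟩
  have hval : ∀ z : GG, chi (Finsupp.single j 1) z = AddCircle.toCircle (z j) := by
    intro z
    rw [chi_apply, Finsupp.support_single_ne_zero j one_ne_zero, Finset.prod_singleton,
      Finsupp.single_eq_same, fourier_one]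
  simp only [hval]
  intro h
  exact hj (AddCircle.injective_toCircle (by positivity : (0:ℝ) < 2 * π).ne'
    (Circle.coe_injective h))

lemma integrable_cm (f : C(GG, ℂ)) (μ : Measure GG) [IsFiniteMeasure μ] :
    Integrable f μ :=
  (ContinuousMap.equivBoundedOfCompact GG ℂ f).integrable μ

/-- Integral of a nontrivial character against any flow-invariant probability measure
vanishes. -/
lemma integral_chi_eq_zero (ω : ℕ → ℝ)
    (hindep : ∀ k : ℕ →₀ ℤ, k ≠ 0 → (∑ j ∈ k.support, (k j : ℝ) * ω j) ≠ 0)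
    (μ : Measure GG) [IsProbabilityMeasure μ]
    (hinv : ∀ t : ℝ, MeasurePreserving (Phi ω t) μ μ)
    (k : ℕ →₀ ℤ) (hk : k ≠ 0) :
    ∫ x, chi k x ∂μ = 0 := by
  set c : ℝ := ∑ j ∈ k.support, (k j : ℝ) * ω j with hc_def
  have hc : c ≠ 0 := hindep k hk
  set t : ℝ := π / c with ht_def
  -- the multiplier
  have hmul : ∀ θ : GG, chi k (Phi ω t θ) = (-1) * chi k θ := by
    intro θ
    have h1 : chi k (Phi ω t θ)
        = (∏ j ∈ k.support, fourier (k j) (((ω j * t : ℝ) : AddCircle (2 * π))))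
          * chi k θ := by
      rw [chi_apply, chi_apply, ← Finset.prod_mul_distrib]
      refine Finset.prod_congr rfl (fun j _ => ?_)
      rw [show Phi ω t θ j = θ j + ((ω j * t : ℝ) : AddCircle (2 * π)) from rfl,
        fourier_arg_add]
      ring
    rw [h1]
    congr 1
    -- compute the product of exponentials
    have h2 : ∀ j ∈ k.support,
        fourier (k j) (((ω j * t : ℝ) : AddCircle (2 * π)))
          = Complex.exp (Complex.I * ((k j : ℝ) * ω j * t : ℝ)) := by
      intro j _
      rw [fourier_coe_apply]
      congr 1
      have hpi : ((π : ℂ)) ≠ 0 := Complex.ofReal_ne_zero.mpr Real.pi_ne_zero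
      push_cast
      field_simp
    rw [Finset.prod_congr rfl h2, ← Complex.exp_sum]
    have h3 : (∑ j ∈ k.support, Complex.I * ((k j : ℝ) * ω j * t : ℝ))
        = Complex.I * ((c * t : ℝ) : ℂ) := by
      rw [← Finset.mul_sum]
      congr 1
      push_cast [hc_def]
      rw [Finset.sum_mul]
    rw [h3]
    have h4 : c * t = π := by
      rw [ht_def, mul_comm, div_mul_cancel₀ _ hc]
    rw [h4, mul_comm]
    exact Complex.exp_pi_mul_I
  -- invariance
  have hmeas : Measurable (Phi ω t) := (continuous_Phi ω t).measurable
  have hint : ∫ x, chi k x ∂μ = ∫ x, chi k (Phi ω t x) ∂μ := by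
    conv_lhs => rw [← (hinv t).map_eq]
    exact integral_map hmeas.aemeasurable
      (map_continuous (chi k)).aestronglyMeasurable
  have hcomp : (fun x : GG => chi k (Phi ω t x)) = fun x : GG => -(chi k x) := by
    funext θ
    rw [hmul θ]
    ring
  have hthis : ∫ x, chi k x ∂μ = -∫ x, chi k x ∂μ := by
    conv_lhs => rw [hint, hcomp]
    exact integral_neg _
  have h5 : (2 : ℂ) * ∫ x, chi k x ∂μ = 0 := by linear_combination hthis
  exact (mul_eq_zero.mp h5).resolve_left two_ne_zero

lemma integral_chi (ω : ℕ → ℝ)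
    (hindep : ∀ k : ℕ →₀ ℤ, k ≠ 0 → (∑ j ∈ k.support, (k j : ℝ) * ω j) ≠ 0)
    (μ : Measure GG) [IsProbabilityMeasure μ]
    (hinv : ∀ t : ℝ, MeasurePreserving (Phi ω t) μ μ)
    (k : ℕ →₀ ℤ) :
    ∫ x, chi k x ∂μ = if k = 0 then 1 else 0 := by
  by_cases hk : k = 0
  · subst hk
    rw [chi_zero]
    simp [integral_const]
  · rw [if_neg hk]
    exact integral_chi_eq_zero ω hindep μ hinv k hk

/-- Main uniqueness lemma: any flow-invariant Borel probability measure is `haarG`. -/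
lemma eq_haarG (ω : ℕ → ℝ)
    (hindep : ∀ k : ℕ →₀ ℤ, k ≠ 0 → (∑ j ∈ k.support, (k j : ℝ) * ω j) ≠ 0)
    (μ : Measure GG) [IsProbabilityMeasure μ]
    (hinv : ∀ t : ℝ, MeasurePreserving (Phi ω t) μ μ) :
    μ = haarG := by
  -- step 1: equal integrals on the span of characters
  have hspan : ∀ f ∈ Submodule.span ℂ (Set.range chi),
      ∫ x, f x ∂μ = ∫ x, f x ∂haarG := by
    intro f hf
    induction hf using Submodule.span_induction with
    | mem f hf =>
      obtain ⟨k, rfl⟩ := hf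
      rw [integral_chi ω hindep μ hinv k,
        integral_chi ω hindep haarG (haarG_flow_invariant ω) k]
    | zero => simp
    | add f g _ _ hf hg =>
      simp only [ContinuousMap.add_apply]
      rw [integral_add (integrable_cm f μ) (integrable_cm g μ),
        integral_add (integrable_cm f haarG) (integrable_cm g haarG), hf, hg]
    | smul c f _ hf =>
      simp only [ContinuousMap.smul_apply]
      rw [integral_smul, integral_smul, hf]
  -- step 2: equal integrals on all continuous complex functions
  have hcont : ∀ f : C(GG, ℂ), ∫ x, f x ∂μ = ∫ x, f x ∂haarG := by
    intro f
    have hdense := ContinuousMap.starSubalgebra_topologicalClosure_eq_top_of_separatesPoints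
      (StarAlgebra.adjoin ℂ (Set.range chi)) chi_separates
    have hf : f ∈ closure ((StarAlgebra.adjoin ℂ (Set.range chi) : Set C(GG, ℂ))) := by
      have : f ∈ (StarAlgebra.adjoin ℂ (Set.range chi)).topologicalClosure := by
        rw [hdense]; trivial
      exact this
    obtain ⟨u, hu_mem, hu_tendsto⟩ := mem_closure_iff_seq_limit.mp hf
    have hnorm : Filter.Tendsto (fun n => ‖u n - f‖) Filter.atTop (nhds 0) := by
      simpa using (tendsto_iff_norm_sub_tendsto_zero.mp hu_tendsto)
    have key : ∀ (ν : Measure GG), IsProbabilityMeasure ν →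
        Filter.Tendsto (fun n => ∫ x, u n x ∂ν) Filter.atTop (nhds (∫ x, f x ∂ν)) := by
      intro ν hν
      rw [tendsto_iff_norm_sub_tendsto_zero]
      refine squeeze_zero (fun n => norm_nonneg _) (fun n => ?_) hnorm
      have hsub : ∫ x, u n x ∂ν - ∫ x, f x ∂ν = ∫ x, (u n x - f x) ∂ν := by
        rw [integral_sub (integrable_cm (u n) ν) (integrable_cm f ν)]
      rw [hsub]
      have hb : ∀ᵐ x ∂ν, ‖u n x - f x‖ ≤ ‖u n - f‖ := by
        filter_upwards with x
        exact (ContinuousMap.norm_coe_le_norm (u n - f) x)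
      calc ‖∫ x, (u n x - f x) ∂ν‖ ≤ ‖u n - f‖ * (ν Set.univ).toReal :=
            norm_integral_le_of_norm_le_const hb
        _ = ‖u n - f‖ := by rw [hν.measure_univ]; simp
    have h1 := key μ inferInstance
    have h2 := key haarG inferInstance
    have heq : (fun n => ∫ x, u n x ∂μ) = fun n => ∫ x, u n x ∂haarG := by
      funext n
      exact hspan (u n) (mem_span_of_mem_adjoin (hu_mem n))
    rw [heq] at h1
    exact tendsto_nhds_unique h1 h2
  -- step 3: conclude by the finite-measure extensionality lemma
  refine ext_of_forall_lintegral_eq_of_IsFiniteMeasure (fun g => ?_)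
  have hcg : Continuous fun x => ((g x : ℝ)) := NNReal.continuous_coe.comp g.continuous
  have hint_μ : Integrable (fun x => ((g x : ℝ))) μ :=
    (ContinuousMap.equivBoundedOfCompact GG ℝ ⟨fun x => ((g x : ℝ)), hcg⟩).integrable μ
  have hint_h : Integrable (fun x => ((g x : ℝ))) haarG :=
    (ContinuousMap.equivBoundedOfCompact GG ℝ ⟨fun x => ((g x : ℝ)), hcg⟩).integrable haarG
  rw [lintegral_coe_eq_integral _ hint_μ, lintegral_coe_eq_integral _ hint_h]
  congr 1
  have hmain := hcont ⟨fun x => ((g x : ℝ) : ℂ), Complex.continuous_ofReal.comp hcg⟩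
  simp only [ContinuousMap.coe_mk] at hmain
  refine Complex.ofReal_injective ?_
  calc ((∫ x, ((g x : ℝ)) ∂μ : ℝ) : ℂ) = ∫ x, (((g x : ℝ)) : ℂ) ∂μ := integral_ofReal.symm
    _ = ∫ x, (((g x : ℝ)) : ℂ) ∂haarG := hmain
    _ = ((∫ x, ((g x : ℝ)) ∂haarG : ℝ) : ℂ) := integral_ofReal

/-- The Haar measure of a cylinder is the product of circle Haar measures. -/
lemma haarG_cylinder (F : Finset ℕ) (B : ℕ → Set (AddCircle (2 * π)))
    (hB : ∀ i, MeasurableSet (B i)) :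
    haarG {x | ∀ i ∈ F, x i ∈ B i} = ∏ i ∈ F, AddCircle.haarAddCircle (B i) := by
  classical
  set r : GG → (↥F → AddCircle (2 * π)) := fun x i => x (i : ℕ) with hr_def
  have hr : Measurable r := measurable_pi_lambda _ fun i => measurable_pi_apply _
  -- the pushforward is an invariant probability measure
  haveI hprob : IsProbabilityMeasure (haarG.map r) := Measure.isProbabilityMeasure_map hr.aemeasurable
  haveI hinv : (haarG.map r).IsAddLeftInvariant := by
    constructor
    intro c'
    have hc'm : Measurable (fun y : ↥F → AddCircle (2 * π) => c' + y) :=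
      (continuous_const.add continuous_id).measurable
    set c : GG := fun j => if h : j ∈ F then c' ⟨j, h⟩ else 0 with hc_def
    have hcm : Measurable (fun x : GG => c + x) :=
      (continuous_const.add continuous_id).measurable
    rw [Measure.map_map hc'm hr]
    have hcomm : (fun y : ↥F → AddCircle (2 * π) => c' + y) ∘ r = r ∘ (fun x => c + x) := by
      funext x
      funext i
      simp only [Function.comp_apply, Pi.add_apply, hr_def, hc_def]
      rw [dif_pos i.2]
    rw [hcomm, ← Measure.map_map hr hcm, map_add_left_eq_self haarG c]
  -- identify with the product measure by uniqueness of Haar measure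
  have hmap : haarG.map r = Measure.pi (fun _ : ↥F => AddCircle.haarAddCircle) := by
    haveI hppi : IsProbabilityMeasure
        (Measure.pi (fun _ : ↥F => (AddCircle.haarAddCircle : Measure (AddCircle (2 * π))))) :=
      inferInstance
    have h1 := Measure.addHaarMeasure_unique (haarG.map r)
      (⊤ : TopologicalSpace.PositiveCompacts (↥F → AddCircle (2 * π)))
    have h2 := Measure.addHaarMeasure_unique
      (Measure.pi (fun _ : ↥F => AddCircle.haarAddCircle))
      (⊤ : TopologicalSpace.PositiveCompacts (↥F → AddCircle (2 * π)))
    have htop : ((⊤ : TopologicalSpace.PositiveCompacts (↥F → AddCircle (2 * π)))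
        : Set (↥F → AddCircle (2 * π))) = Set.univ := by simp
    rw [htop] at h1 h2
    rw [h1, h2, measure_univ, measure_univ]
  -- conclude
  have hset : {x : GG | ∀ i ∈ F, x i ∈ B i} = r ⁻¹' (Set.univ.pi fun i : ↥F => B (i : ℕ)) := by
    ext x
    simp only [Set.mem_setOf_eq, Set.mem_preimage, Set.mem_pi, Set.mem_univ, forall_true_left,
      hr_def]
    constructor
    · intro h i
      exact h i i.2
    · intro h i hi
      exact h ⟨i, hi⟩
  rw [hset, ← Measure.map_apply hr (MeasurableSet.univ_pi fun i => hB _), hmap, Measure.pi_pi]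
  exact Finset.prod_coe_sort F (fun i => AddCircle.haarAddCircle (B i))

end Stmt5Aux

end Stmt5Aux

open Stmt5Aux in
/-- for rationally independent `ω`, the linear flow
`Φ_t(θ) = θ + ωt` on `𝕋^ℕ` is uniquely ergodic: there is a unique invariant
Borel probability measure, and it is the product of the normalized Haar
measures (characterized on cylinder sets). -/
theorem stmt5 (ω : ℕ → ℝ)
    (hindep : ∀ k : ℕ →₀ ℤ, k ≠ 0 → (∑ j ∈ k.support, (k j : ℝ) * ω j) ≠ 0) :
    (∃! μ : Measure (ℕ → AddCircle (2 * π)),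
        IsProbabilityMeasure μ ∧
        ∀ t : ℝ, MeasurePreserving
          (fun θ j => θ j + ((ω j * t : ℝ) : AddCircle (2 * π))) μ μ) ∧
    ∀ μ : Measure (ℕ → AddCircle (2 * π)),
      IsProbabilityMeasure μ →
      (∀ t : ℝ, MeasurePreserving
          (fun θ j => θ j + ((ω j * t : ℝ) : AddCircle (2 * π))) μ μ) →
      ∀ (F : Finset ℕ) (B : ℕ → Set (AddCircle (2 * π))),
        (∀ i, MeasurableSet (B i)) →
        μ {x | ∀ i ∈ F, x i ∈ B i} = ∏ i ∈ F, AddCircle.haarAddCircle (B i) := by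
  constructor
  · refine ⟨haarG, ⟨inferInstance, haarG_flow_invariant ω⟩, ?_⟩
    rintro ν ⟨hνp, hνinv⟩
    exact eq_haarG ω hindep ν hνinv
  · intro μ hμp hμinv F B hB
    haveI := hμp
    rw [eq_haarG ω hindep μ hμinv]
    exact haarG_cylinder F B hB
end

section
/- Among the Newton sums p_m(u) = Σ_{k∈ℤ} |u_k|^{2m} for m ≥ 2, the ℓ² gradient is 1-smoothing in the following quantitative sense: for m ≥ 2 and any s ≥ 0, the map u ↦ ∇p_m(u), whose k-th component is 2m |u_k|^{2(m-1)} u_k, satisfies ‖∇p_m(u)‖_{ℓ¹_{s+σ}} ≤ 2m ‖u‖_{ℓ¹_σ}^{2(m-1)} ‖u‖_{ℓ¹_s} for every σ ≥ 0 with the property that sup_k ⟨k⟩^σ |u_k| ≤ ‖u‖_{ℓ¹_σ}; in particular for m ≥ 2 and u ∈ ℓ¹_1, ∇p_m maps ℓ¹_s into ℓ¹_{s+1} with ‖∇p_m(u)‖_{ℓ¹_{s+1}} ≤ 2m ‖u‖_{ℓ¹_1}^{2(m-1)} ‖u‖_{ℓ¹_s}. By contrast, for m = 1 the gradient ∇p_1(u)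 = 2u gains no regularity. -/
noncomputable def jap (n : ℤ) : ℝ := max 1 |(n : ℝ)|

lemma jap_pos (n : ℤ) : 0 < jap n := lt_of_lt_of_le one_pos (le_max_left _ _)

lemma one_le_jap (n : ℤ) : 1 ≤ jap n := le_max_left _ _

/-- for `m ≥ 2` the gradient of the Newton sum
`p_m(u) = Σ_k |u_k|^{2m}`, with components `2m|u_k|^{2(m-1)}u_k`, is smoothing:
`‖∇p_m(u)‖_{ℓ¹_{s+σ}} ≤ 2m ‖u‖_{ℓ¹_σ}^{2(m-1)} ‖u‖_{ℓ¹_s}` whenever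
`sup_k ⟨k⟩^σ|u_k| ≤ ‖u‖_{ℓ¹_σ}`. -/
theorem stmt12 (m : ℕ) (hm : 2 ≤ m) (s σ : ℝ) (hs : 0 ≤ s) (hσ : 0 ≤ σ)
    (u : ℤ → ℂ)
    (hus : Summable fun k : ℤ => jap k ^ s * ‖u k‖)
    (huσ : Summable fun k : ℤ => jap k ^ σ * ‖u k‖)
    (hsup : ∀ k : ℤ, jap k ^ σ * ‖u k‖ ≤ ∑' k : ℤ, jap k ^ σ * ‖u k‖) :
    Summable (fun k : ℤ =>
      jap k ^ (s + σ) * ((2 * m : ℝ) * ‖u k‖ ^ (2 * (m - 1)) * ‖u k‖)) ∧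
    (∑' k : ℤ, jap k ^ (s + σ) * ((2 * m : ℝ) * ‖u k‖ ^ (2 * (m - 1)) * ‖u k‖)) ≤
      (2 * m : ℝ) * (∑' k : ℤ, jap k ^ σ * ‖u k‖) ^ (2 * (m - 1)) *
        (∑' k : ℤ, jap k ^ s * ‖u k‖) := by
  set A : ℝ := ∑' k : ℤ, jap k ^ σ * ‖u k‖ with hA
  set n : ℕ := 2 * (m - 1) with hn
  have hn1 : 1 ≤ n := by omega
  have hA0 : 0 ≤ A := by
    exact tsum_nonneg fun k =>
      mul_nonneg (Real.rpow_nonneg (jap_pos k).le σ) (norm_nonneg _)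
  -- key termwise bound
  have key : ∀ k : ℤ,
      jap k ^ (s + σ) * ((2 * m : ℝ) * ‖u k‖ ^ n * ‖u k‖) ≤
      (2 * m : ℝ) * A ^ n * (jap k ^ s * ‖u k‖) := by
    intro k
    have hjk : (0 : ℝ) < jap k := jap_pos k
    have hsplit : jap k ^ (s + σ) = jap k ^ s * jap k ^ σ :=
      Real.rpow_add hjk s σ
    have hu0 : 0 ≤ ‖u k‖ := norm_nonneg _
    have h1 : ‖u k‖ ≤ jap k ^ σ * ‖u k‖ := by
      nlinarith [Real.one_le_rpow (one_le_jap k) hσ]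
    have h2 : ‖u k‖ ≤ A := h1.trans (hsup k)
    have h3 : jap k ^ σ * ‖u k‖ ^ n ≤ A ^ n := by
      calc jap k ^ σ * ‖u k‖ ^ n
          = (jap k ^ σ * ‖u k‖) * ‖u k‖ ^ (n - 1) := by
            rw [mul_assoc]
            congr 1
            rw [← pow_succ']
            congr 1
            omega
        _ ≤ A * A ^ (n - 1) := by
            apply mul_le_mul (hsup k) (pow_le_pow_left₀ hu0 h2 _) (by positivity) hA0
        _ = A ^ n := by
            rw [← pow_succ']
            congr 1
            omega
    have hjs : (0 : ℝ) ≤ jap k ^ s := by positivity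
    calc jap k ^ (s + σ) * ((2 * m : ℝ) * ‖u k‖ ^ n * ‖u k‖)
        = (2 * m : ℝ) * (jap k ^ σ * ‖u k‖ ^ n) * (jap k ^ s * ‖u k‖) := by
          rw [hsplit]; ring
      _ ≤ (2 * m : ℝ) * A ^ n * (jap k ^ s * ‖u k‖) := by
          apply mul_le_mul_of_nonneg_right _ (by positivity)
          apply mul_le_mul_of_nonneg_left h3 (by positivity)
  have hsum : Summable (fun k : ℤ =>
      jap k ^ (s + σ) * ((2 * m : ℝ) * ‖u k‖ ^ n * ‖u k‖)) := by
    apply Summable.of_nonneg_of_le (fun k =>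
      mul_nonneg (Real.rpow_nonneg (jap_pos k).le _)
        (mul_nonneg (mul_nonneg (by positivity) (by positivity)) (norm_nonneg _))) key
    exact (hus.mul_left _)
  refine ⟨hsum, ?_⟩
  calc (∑' k : ℤ, jap k ^ (s + σ) * ((2 * m : ℝ) * ‖u k‖ ^ n * ‖u k‖))
      ≤ ∑' k : ℤ, (2 * m : ℝ) * A ^ n * (jap k ^ s * ‖u k‖) :=
        Summable.tsum_le_tsum key hsum (hus.mul_left _)
    _ = (2 * m : ℝ) * A ^ n * ∑' k : ℤ, jap k ^ s * ‖u k‖ := tsum_mul_left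
end
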